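/- Let a and q be nonzero complex numbers and let m, n, i be integers with 0 ≤ i ≤ n−1. Then {m}_i {n}_i {m+n−i−2; a}_{n−i} {n−1; a}_{n−i} = {m}_i {n}_i {m+n−i−1; a}_{n−i} {n−2; a}_{n−i} + {m}_{i+1} {n}_{i+1} {m+n−i−2; a}_{n−i−1} {n−2; a}_{n−i−1}. -/

import Mathlib

/-!
Split off the last factor `{m-1; a}` of `{m+n-i-2; a}_{n-i}` and the first factor `{n-1; a}` of
`{n-1; a}_{n-i}`, and similarly on the right. All three terms then share the factor
`{m}_i {n}_i {m+n-i-2; a}_{n-i-1} {n-2; a}_{n-i-1}`, and what remains is the three-term relation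
`{x; a}{y; a} = {x+y-z; a}{z; a} + {x-z}{y-z}` at `x, y, z = m-1, n-1, i-1`.
-/

open Finset

/-- The balanced q-bracket `{n} = q^n - q^(-n)`. -/
noncomputable def qbr (q : ℂ) (n : ℤ) : ℂ := q ^ n - q ^ (-n)

/-- The two-variable bracket `{n; a} = a q^n - a⁻¹ q^(-n)`. -/
noncomputable def qbrA (a q : ℂ) (n : ℤ) : ℂ := a * q ^ n - a⁻¹ * q ^ (-n)

/-- Descending product `{n}_i = {n}{n-1}⋯{n-i+1}` (equal to 1 when `i = 0`). -/
noncomputable def qbrP (q : ℂ) (n : ℤ) (i : ℕ) : ℂ := ∏ k ∈ Finset.range i, qbr q (n - k)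

/-- Descending product `{n; a}_i = {n; a}{n-1; a}⋯{n-i+1; a}` (equal to 1 when `i = 0`). -/
noncomputable def qbrAP (a q : ℂ) (n : ℤ) (i : ℕ) : ℂ := ∏ k ∈ Finset.range i, qbrA a q (n - k)

/-- Ascending product `{n; a}{n+1; a}⋯{n+i-1; a}` (used for `{-n; a}_i`, equal to 1 when `i = 0`). -/
noncomputable def qbrAPasc (a q : ℂ) (n : ℤ) (i : ℕ) : ℂ := ∏ k ∈ Finset.range i, qbrA a q (n + k)

/-- The factorial `{n}! = {n}_n`. -/
noncomputable def qfac (q : ℂ) (n : ℕ) : ℂ := qbrP q n n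

/-- The balanced q-binomial coefficient `[n choose i] = {n}!/({i}!{n-i}!)`. -/
noncomputable def qbinom (q : ℂ) (n i : ℕ) : ℂ := qfac q n / (qfac q i * qfac q (n - i))

theorem qbrA_mul_qbrA {a q : ℂ} (ha : a ≠ 0) (hq : q ≠ 0) (x y z : ℤ) :
    qbrA a q x * qbrA a q y =
      qbrA a q (x + y - z) * qbrA a q z + qbr q (x - z) * qbr q (y - z) := by
  simp only [qbrA, qbr, zpow_neg, zpow_sub₀ hq, zpow_add₀ hq]
  field_simp
  ring

theorem qbrP_succ (q : ℂ) (n : ℤ) (i : ℕ) : qbrP q n (i + 1) = qbrP q n i * qbr q (n - i) :=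
  prod_range_succ _ _

theorem qbrAP_succ (a q : ℂ) (n : ℤ) (i : ℕ) :
    qbrAP a q n (i + 1) = qbrAP a q n i * qbrA a q (n - i) :=
  prod_range_succ _ _

theorem qbrAP_succ' (a q : ℂ) (n : ℤ) (i : ℕ) :
    qbrAP a q n (i + 1) = qbrA a q n * qbrAP a q (n - 1) i := by
  simp only [qbrAP, prod_range_succ', Nat.cast_zero, sub_zero, Nat.cast_succ,
    sub_add_eq_sub_sub_swap]
  ring

theorem statement_5 (a q : ℂ) (ha : a ≠ 0) (hq : q ≠ 0) (m : ℤ) (n i : ℕ)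
    (hi : (i : ℤ) ≤ (n : ℤ) - 1) :
    qbrP q m i * qbrP q n i * qbrAP a q (m + (n : ℤ) - (i : ℤ) - 2) (n - i) *
        qbrAP a q ((n : ℤ) - 1) (n - i) =
      qbrP q m i * qbrP q n i * qbrAP a q (m + (n : ℤ) - (i : ℤ) - 1) (n - i) *
          qbrAP a q ((n : ℤ) - 2) (n - i) +
        qbrP q m (i + 1) * qbrP q n (i + 1) *
          qbrAP a q (m + (n : ℤ) - (i : ℤ) - 2) (n - i - 1) *
          qbrAP a q ((n : ℤ) - 2) (n - i - 1) := by
  obtain ⟨j, hj⟩ : ∃ j, n - i = j + 1 := ⟨n - i - 1, by omega⟩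
  have hj' : (j : ℤ) = n - i - 1 := by omega
  rw [hj, Nat.add_sub_cancel, qbrAP_succ _ _ (m + n - i - 2), qbrAP_succ' _ _ (n - 1),
    qbrAP_succ' _ _ (m + n - i - 1), qbrAP_succ _ _ (n - 2), qbrP_succ, qbrP_succ, hj']
  -- `ring_nf` also normalizes the integer indices, e.g. `m + n - i - 2 - (n - i - 1)` to `m - 1`.
  linear_combination (norm := ring_nf) qbrP q m i * qbrP q n i * qbrAP a q (m + n - i - 2) j *
    qbrAP a q (n - 2) j * qbrA_mul_qbrA ha hq (m - 1) (n - 1) (i - 1)
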